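/- Let R₀, R₁, …, R_m be exchangeable real random variables, let B₁, …, B_{n-m} be arbitrary real random variables, let α ∈ [0,1], let k = ⌈(n+1)(1-α)⌉, and let q̂ be the k-th order statistic of {R₁,…,R_m,B₁,…,B_{n-m}} (with q̂ = +∞ if k > n). Then P(R₀ ≤ q̂) ≥ 1 - α - (n - m)/(m + 1). -/

import Mathlib

open MeasureTheory ENNReal

/-- The `k`-th smallest element (1-indexed) of a multiset of reals. -/
noncomputable def kthSmallest (s : Multiset ℝ) (k : ℕ) : ℝ := (s.sort (· ≤ ·)).getD (k - 1) 0

/-- A finite family of real random variables is exchangeable if the joint law is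
invariant under every permutation of the indices. -/
def Exchangeable {Ω : Type*} [MeasurableSpace Ω] (P : Measure Ω)
    {ι : Type*} [Fintype ι] (R : ι → Ω → ℝ) : Prop :=
  ∀ σ : Equiv.Perm ι,
    Measure.map (fun ω i => R (σ i) ω) P = Measure.map (fun ω i => R i ω) P

lemma sorted_countP_lt (l : List ℝ) (hl : l.Pairwise (· ≤ ·)) (p : ℕ) (hp : p < l.length) :
    l.countP (· < l.get ⟨p, hp⟩) ≤ p := by
  induction l generalizing p with
  | nil => simp at hp
  | cons a l ih =>
    rw [List.pairwise_cons] at hl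
    cases p with
    | zero =>
      simp only [List.get, List.countP_cons]
      have : l.countP (· < a) = 0 := by
        rw [List.countP_eq_zero]
        intro x hx
        simp only [decide_eq_true_eq]
        exact not_lt.2 (hl.1 x hx)
      simp [this]
    | succ q =>
      simp only [List.get, List.countP_cons]
      have := ih hl.2 q (by simpa using hp)
      split <;> omega

lemma sorted_countP_le (l : List ℝ) (hl : l.Pairwise (· ≤ ·)) (p : ℕ) (hp : p < l.length) :
    p + 1 ≤ l.countP (· ≤ l.get ⟨p, hp⟩) := by
  induction l generalizing p with
  | nil => simp at hp
  | cons a l ih =>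
    rw [List.pairwise_cons] at hl
    cases p with
    | zero => simp [List.countP_cons]
    | succ q =>
      have hq : q < l.length := by simpa using hp
      have h1 := ih hl.2 q hq
      have ha : a ≤ l.get ⟨q, hq⟩ := hl.1 _ (l.get_mem _)
      simp only [List.get, List.countP_cons, if_pos (decide_eq_true ha)]
      omega

lemma countP_sort (s : Multiset ℝ) (p : ℝ → Prop) [DecidablePred p] :
    (s.sort (· ≤ ·)).countP (fun r => decide (p r)) = s.countP p := by
  conv_rhs => rw [← Multiset.sort_eq (s := s) (r := (· ≤ ·))]
  exact (Multiset.coe_countP _ _).symm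

lemma filter_card_countP {N : ℕ} (x : Fin N → ℝ) (p : ℝ → Prop) [DecidablePred p] :
    (Finset.univ.filter fun i => p (x i)).card
      = (Multiset.map x Finset.univ.val).countP p := by
  rw [Multiset.countP_map]
  rfl

lemma le_kthSmallest_of_countP_lt (s : Multiset ℝ) (k : ℕ) (hk1 : 1 ≤ k) (hk2 : k ≤ s.card)
    (x : ℝ) (h : s.countP (· < x) < k) : x ≤ kthSmallest s k := by
  have hlen : (s.sort (· ≤ ·)).length = s.card := s.length_sort _
  have hkl : k - 1 < (s.sort (· ≤ ·)).length := by omega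
  have hget : kthSmallest s k = (s.sort (· ≤ ·)).get ⟨k - 1, hkl⟩ := by
    rw [kthSmallest, List.getD_eq_getElem _ _ hkl]; rfl
  by_contra hx
  push_neg at hx
  rw [hget] at hx
  have h1 := sorted_countP_le (s.sort (· ≤ ·)) (Multiset.pairwise_sort (s := s) (r := (· ≤ ·))) (k-1) hkl
  have h2 : (s.sort (· ≤ ·)).countP (fun r => decide (r ≤ (s.sort (· ≤ ·)).get ⟨k-1, hkl⟩))
      ≤ (s.sort (· ≤ ·)).countP (fun r => decide (r < x)) := by
    apply List.countP_mono_left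
    intro a _ ha
    simp only [decide_eq_true_eq] at *
    exact lt_of_le_of_lt ha hx
  rw [countP_sort s (· < x)] at h2
  omega

lemma card_low_rank {N : ℕ} (x : Fin N → ℝ) (j : ℕ) (hj1 : 1 ≤ j) (hjN : j ≤ N) :
    j ≤ (Finset.univ.filter fun a =>
      (Finset.univ.filter fun i => x i < x a).card < j).card := by
  set s : Multiset ℝ := Multiset.map x Finset.univ.val with hs
  have hcard : Multiset.card s = N := by simp [hs]
  have hlen : (s.sort (· ≤ ·)).length = N := by rw [Multiset.length_sort, hcard]
  have hjl : j - 1 < (s.sort (· ≤ ·)).length := by omega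
  set t := (s.sort (· ≤ ·)).get ⟨j - 1, hjl⟩ with ht
  have claim1 : j ≤ (Finset.univ.filter fun a => x a ≤ t).card := by
    rw [filter_card_countP x (· ≤ t), ← countP_sort s (· ≤ t)]
    have := sorted_countP_le (s.sort (· ≤ ·)) (Multiset.pairwise_sort (s := s) (r := (· ≤ ·))) (j-1) hjl
    rw [← ht] at this
    omega
  refine le_trans claim1 (Finset.card_le_card ?_)
  intro a ha
  simp only [Finset.mem_filter, Finset.mem_univ, true_and] at *
  rw [filter_card_countP x (· < x a), ← countP_sort s (· < x a)]
  have h2 : (s.sort (· ≤ ·)).countP (fun r => decide (r < x a))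
      ≤ (s.sort (· ≤ ·)).countP (fun r => decide (r < t)) := by
    apply List.countP_mono_left
    intro b _ hb
    simp only [decide_eq_true_eq] at *
    exact lt_of_lt_of_le hb ha
  have h3 : (s.sort (· ≤ ·)).countP (fun r => decide (r < t)) ≤ j - 1 :=
    sorted_countP_lt (s.sort (· ≤ ·)) (Multiset.pairwise_sort (s := s) (r := (· ≤ ·))) (j-1) hjl
  omega

lemma perm_filter_card {ι : Type*} [Fintype ι] [DecidableEq ι] (σ : Equiv.Perm ι)
    (p : ι → Prop) [DecidablePred p] :
    (Finset.univ.filter fun i => p (σ i)).card = (Finset.univ.filter p).card := by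
  rw [← Finset.card_image_of_injective (Finset.univ.filter fun i => p (σ i)) σ.injective]
  congr 1
  ext b
  simp only [Finset.mem_image, Finset.mem_filter, Finset.mem_univ, true_and]
  constructor
  · rintro ⟨i, hi, rfl⟩; exact hi
  · intro hb; exact ⟨σ.symm b, by simpa using hb, by simp⟩

lemma meas_S {N : ℕ} (a : Fin N) (j : ℕ) :
    MeasurableSet {x : Fin N → ℝ | (Finset.univ.filter fun i => x i < x a).card < j} := by
  have hg : Measurable fun x : Fin N → ℝ =>
      (Finset.univ.filter fun i => x i < x a).card := by
    have : (fun x : Fin N → ℝ => (Finset.univ.filter fun i => x i < x a).card)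
        = fun x => ∑ i, if x i < x a then 1 else 0 := by
      funext x; exact Finset.card_filter _ _
    rw [this]
    exact Finset.measurable_sum _ fun i _ =>
      Measurable.ite (measurableSet_lt (measurable_pi_apply i) (measurable_pi_apply a))
        measurable_const measurable_const
  exact hg (by trivial : MeasurableSet (Set.Iio j))

lemma rank_bound {Ω : Type*} [MeasurableSpace Ω]
    (P : Measure Ω) [IsProbabilityMeasure P] (m : ℕ)
    (R : Fin (m + 1) → Ω → ℝ) (hmeas : ∀ i, Measurable (R i))
    (hexch : Exchangeable P R) (j : ℕ) (hj1 : 1 ≤ j) (hjN : j ≤ m + 1) :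
    (j : ℝ≥0∞) ≤ (m + 1 : ℕ) *
      P {ω | (Finset.univ.filter fun i => R i ω < R 0 ω).card < j} := by
  classical
  set f : Ω → (Fin (m+1) → ℝ) := fun ω i => R i ω with hf_def
  have hf : Measurable f := measurable_pi_lambda _ hmeas
  set S : Fin (m+1) → Set (Fin (m+1) → ℝ) :=
    fun a => {x | (Finset.univ.filter fun i => x i < x a).card < j} with hS_def
  have hS : ∀ a, MeasurableSet (S a) := fun a => meas_S a j
  have hPeq : ∀ a : Fin (m+1), P (f ⁻¹' S a) = P (f ⁻¹' S 0) := by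
    intro a
    set σ : Equiv.Perm (Fin (m+1)) := Equiv.swap 0 a with hσ
    have hg : Measurable (fun ω i => R (σ i) ω) := measurable_pi_lambda _ fun i => hmeas _
    have hset : f ⁻¹' S a = (fun ω i => R (σ i) ω) ⁻¹' S 0 := by
      ext ω
      simp only [Set.mem_preimage, hS_def, Set.mem_setOf_eq, hf_def]
      rw [perm_filter_card σ (fun i => R i ω < R (σ 0) ω)]
      rw [Equiv.swap_apply_left]
    rw [hset, ← Measure.map_apply hg (hS 0), hexch σ, Measure.map_apply hf (hS 0)]
  have key : ∀ ω, (j : ℝ≥0∞) ≤ ∑ a : Fin (m+1), (f ⁻¹' S a).indicator 1 ω := by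
    intro ω
    have hcard := card_low_rank (fun i => R i ω) j hj1 hjN
    calc (j : ℝ≥0∞) ≤ ((Finset.univ.filter fun a : Fin (m+1) =>
          (Finset.univ.filter fun i => R i ω < R a ω).card < j).card : ℝ≥0∞) := by
          exact_mod_cast hcard
      _ = ∑ a : Fin (m+1), if (Finset.univ.filter fun i => R i ω < R a ω).card < j
            then 1 else 0 := by
          rw [Finset.card_filter]; push_cast; rfl
      _ = ∑ a : Fin (m+1), (f ⁻¹' S a).indicator 1 ω := by
          refine Finset.sum_congr rfl fun a _ => ?_
          simp [Set.indicator_apply, hS_def, hf_def, Set.mem_preimage, Set.mem_setOf_eq]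
  have hsum : (j : ℝ≥0∞) ≤ ∑ a : Fin (m+1), P (f ⁻¹' S a) := by
    calc (j : ℝ≥0∞) = ∫⁻ _, (j : ℝ≥0∞) ∂P := by simp
      _ ≤ ∫⁻ ω, ∑ a : Fin (m+1), (f ⁻¹' S a).indicator 1 ω ∂P := lintegral_mono key
      _ = ∑ a : Fin (m+1), ∫⁻ ω, (f ⁻¹' S a).indicator 1 ω ∂P :=
          lintegral_finset_sum _ fun a _ => measurable_const.indicator (hf (hS a))
      _ = ∑ a : Fin (m+1), P (f ⁻¹' S a) := by
          refine Finset.sum_congr rfl fun a _ => ?_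
          exact lintegral_indicator_one (hf (hS a))
  have heq : ∑ a : Fin (m+1), P (f ⁻¹' S a) = (m + 1 : ℕ) * P (f ⁻¹' S 0) := by
    rw [Finset.sum_congr rfl fun a _ => hPeq a, Finset.sum_const, Finset.card_univ,
      Fintype.card_fin, nsmul_eq_mul]
  rw [heq] at hsum
  exact hsum

/-- δ-robust selective conformal coverage (Theorem 1).  The event includes
`n < k`, corresponding to an infinite conformal quantile `q̂ = +∞`, in which case
the test score is trivially covered. -/
theorem delta_robust_selective_conformal {Ω : Type*} [MeasurableSpace Ω]
    (P : Measure Ω) [IsProbabilityMeasure P] (n m : ℕ) (hn : 1 ≤ n) (hmn : m ≤ n)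
    (R : Fin (m + 1) → Ω → ℝ) (hmeas : ∀ i, Measurable (R i))
    (hexch : Exchangeable P R)
    (B : Fin (n - m) → Ω → ℝ)
    (α : ℝ) (hα0 : 0 ≤ α) (hα1 : α ≤ 1)
    (k : ℕ) (hk : (k : ℤ) = ⌈((n : ℝ) + 1) * (1 - α)⌉) :
    (P {ω | n < k ∨ R 0 ω ≤ kthSmallest
        (Multiset.map (fun i : Fin m => R i.succ ω) Finset.univ.val
          + Multiset.map (fun j : Fin (n - m) => B j ω) Finset.univ.val) k}).toReal
      ≥ 1 - α - ((n : ℝ) - (m : ℝ)) / ((m : ℝ) + 1) := by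
  classical
  rw [ge_iff_le]
  have hm1 : (0 : ℝ) < (m : ℝ) + 1 := by positivity
  have hmlen : (m : ℝ) ≤ (n : ℝ) := by exact_mod_cast hmn
  have hnm : (0 : ℝ) ≤ (n : ℝ) - (m : ℝ) := by linarith
  have hdnn : (0 : ℝ) ≤ ((n : ℝ) - (m : ℝ)) / ((m : ℝ) + 1) := div_nonneg hnm hm1.le
  by_cases htriv : 1 - α - ((n : ℝ) - (m : ℝ)) / ((m : ℝ) + 1) ≤ 0
  · exact le_trans htriv ENNReal.toReal_nonneg
  push_neg at htriv
  have hk_ge : ((n : ℝ) + 1) * (1 - α) ≤ (k : ℝ) := by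
    have h1 := Int.le_ceil (((n : ℝ) + 1) * (1 - α))
    rw [← hk] at h1
    exact_mod_cast h1
  by_cases hkn : n < k
  · have huniv : {ω : Ω | n < k ∨ R 0 ω ≤ kthSmallest
        (Multiset.map (fun i : Fin m => R i.succ ω) Finset.univ.val
          + Multiset.map (fun j : Fin (n - m) => B j ω) Finset.univ.val) k} = Set.univ :=
      Set.eq_univ_of_forall fun ω => Or.inl hkn
    rw [huniv, measure_univ, ENNReal.toReal_one]
    linarith
  push_neg at hkn
  -- k ≤ n.  Main case.
  have hjpos : n - m < k := by
    have h2 : ((n : ℝ) - (m : ℝ)) < ((m : ℝ) + 1) * (1 - α) := by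
      have h2' : ((n : ℝ) - (m : ℝ)) / ((m : ℝ) + 1) < 1 - α := by linarith
      rw [div_lt_iff₀ hm1] at h2'
      linarith
    have h3 : ((m : ℝ) + 1) * (1 - α) ≤ ((n : ℝ) + 1) * (1 - α) := by
      apply mul_le_mul_of_nonneg_right (by linarith) (by linarith)
    have h4 : ((n : ℝ) - (m : ℝ)) < (k : ℝ) := by linarith
    have h5 : ((n - m : ℕ) : ℝ) < (k : ℝ) := by
      rwa [Nat.cast_sub hmn]
    exact_mod_cast h5
  set j := k - (n - m) with hjdef
  have hj1 : 1 ≤ j := by omega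
  have hjN : j ≤ m + 1 := by omega
  have hrb := rank_bound P m R hmeas hexch j hj1 hjN
  set E0 : Set Ω := {ω | (Finset.univ.filter fun i => R i ω < R 0 ω).card < j} with hE0
  have hsub : E0 ⊆ {ω : Ω | n < k ∨ R 0 ω ≤ kthSmallest
        (Multiset.map (fun i : Fin m => R i.succ ω) Finset.univ.val
          + Multiset.map (fun j : Fin (n - m) => B j ω) Finset.univ.val) k} := by
    intro ω hω
    right
    set s1 : Multiset ℝ := Multiset.map (fun i : Fin m => R i.succ ω) Finset.univ.val
    set s2 : Multiset ℝ := Multiset.map (fun i : Fin (n - m) => B i ω) Finset.univ.val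
    have hcard : Multiset.card (s1 + s2) = n := by
      have e1 : Multiset.card (Finset.univ.val : Multiset (Fin m)) = m := by
        rw [← Finset.card_def, Finset.card_univ, Fintype.card_fin]
      have e2 : Multiset.card (Finset.univ.val : Multiset (Fin (n - m))) = n - m := by
        rw [← Finset.card_def, Finset.card_univ, Fintype.card_fin]
      simp only [Multiset.card_add, Multiset.card_map, s1, s2, e1, e2]
      omega
    apply le_kthSmallest_of_countP_lt _ k (by omega) (by omega : k ≤ Multiset.card (s1 + s2))
    rw [Multiset.countP_add]
    have hc1 : s1.countP (· < R 0 ω) < j := by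
      rw [← filter_card_countP (fun i : Fin m => R i.succ ω) (· < R 0 ω)]
      have hcnt : (Finset.univ.filter fun i : Fin (m+1) => R i ω < R 0 ω).card
          = (Finset.univ.filter fun i : Fin m => R i.succ ω < R 0 ω).card := by
        rw [Finset.card_filter, Finset.card_filter, Fin.sum_univ_succ]
        simp [lt_irrefl]
      rw [← hcnt]
      exact hω
    have hc2 : s2.countP (· < R 0 ω) ≤ n - m := by
      have := Multiset.countP_le_card (fun r => r < R 0 ω) s2
      simpa [s2, Finset.card_univ] using this
    omega
  have hle : P E0 ≤ P _ := measure_mono hsub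
  have hE0r : (j : ℝ) ≤ ((m : ℝ) + 1) * (P E0).toReal := by
    have hne : ((m + 1 : ℕ) : ℝ≥0∞) * P E0 ≠ ⊤ :=
      ENNReal.mul_ne_top (ENNReal.natCast_ne_top _) (measure_ne_top P _)
    have h1 := ENNReal.toReal_mono hne hrb
    rw [ENNReal.toReal_mul, ENNReal.toReal_natCast (m + 1)] at h1
    simpa using h1
  have hGr : (P E0).toReal ≤ (P {ω : Ω | n < k ∨ R 0 ω ≤ kthSmallest
        (Multiset.map (fun i : Fin m => R i.succ ω) Finset.univ.val
          + Multiset.map (fun j : Fin (n - m) => B j ω) Finset.univ.val) k}).toReal :=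
    ENNReal.toReal_mono (measure_ne_top P _) hle
  have hjr : (j : ℝ) = (k : ℝ) - ((n : ℝ) - (m : ℝ)) := by
    rw [hjdef]
    push_cast [Nat.cast_sub (le_of_lt hjpos), Nat.cast_sub hmn]
    ring
  have hd : ((m : ℝ) + 1) * (((n : ℝ) - (m : ℝ)) / ((m : ℝ) + 1)) = (n : ℝ) - (m : ℝ) :=
    mul_div_cancel₀ _ (ne_of_gt hm1)
  nlinarith [mul_le_mul_of_nonneg_left hGr hm1.le,
    mul_nonneg (sub_nonneg.2 hmlen) (by linarith : (0:ℝ) ≤ 1 - α)]
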